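/- arXiv:1603.00373 — 11 statements merged into one kernel-verified Lean document; each statement's English description precedes it below -/
import Mathlib

section
/- Let (n, ⟨·,·⟩) be a real M-type algebra with J-map J. Then the following are equivalent: (i) for every nonzero x ∈ n_{-1}, the linear map ad_x : n_{-1} → n_{-2}, y ↦ [x,y], is surjective; (ii) for every nonzero z ∈ n_{-2}, the endomorphism J_z of n_{-1} is injective. -/
/-- Proposition 2.5 (2) ↔ (3): for a real M-type algebra `n = n₋₂ ⊕ n₋₁` with J-map `J`,
`ad_x : n₋₁ → n₋₂` is surjective for every nonzero `x` iff `J_z` is injective for every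
nonzero `z ∈ n₋₂`. -/
theorem ad_surjective_iff_J_injective
    (N1 N2 : Type*) [AddCommGroup N1] [Module ℝ N1] [FiniteDimensional ℝ N1]
    [AddCommGroup N2] [Module ℝ N2] [FiniteDimensional ℝ N2]
    (br : N1 →ₗ[ℝ] N1 →ₗ[ℝ] N2) (halt : ∀ x : N1, br x x = 0)
    (B1 : LinearMap.BilinForm ℝ N1) (B2 : LinearMap.BilinForm ℝ N2)
    (hB1symm : ∀ x y, B1 x y = B1 y x) (hB2symm : ∀ z w, B2 z w = B2 w z)
    (hB1 : B1.Nondegenerate) (hB2 : B2.Nondegenerate)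
    (J : N2 →ₗ[ℝ] Module.End ℝ N1)
    (hJ : ∀ (z : N2) (x y : N1), B1 (J z x) y = B2 z (br x y)) :
    (∀ x : N1, x ≠ 0 → Function.Surjective (br x)) ↔
    (∀ z : N2, z ≠ 0 → Function.Injective (J z)) := by
  constructor
  · intro had z hz
    rw [injective_iff_map_eq_zero]
    intro x hx
    by_contra hx0
    have : ∀ w : N2, B2 z w = 0 := by
      intro w
      obtain ⟨y, rfl⟩ := had x hx0 w
      rw [← hJ, hx]
      simp
    exact hz (hB2.1 z this)
  · intro hinj x hx
    rw [← LinearMap.range_eq_top]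
    by_contra hne
    obtain ⟨f, hf, hf'⟩ := Submodule.exists_dual_map_eq_bot_of_lt_top
      (lt_top_iff_ne_top.mpr hne) inferInstance
    set z := (B2.toDual hB2).symm f with hzdef
    have hz : z ≠ 0 := by
      simp only [hzdef, ne_eq, map_eq_zero_iff _ (B2.toDual hB2).symm.injective]
      exact hf
    have hJz : J z x = 0 := by
      apply hB1.1 (J z x)
      intro y
      rw [hJ]
      have : br x y ∈ LinearMap.range (br x) := ⟨y, rfl⟩
      have := (Submodule.eq_bot_iff _).mp hf' _ (Submodule.mem_map_of_mem this)
      calc B2 z (br x y) = f (br x y) := B2.apply_toDual_symm_apply (hB := hB2) f _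
        _ = 0 := this
    have : x = 0 := by
      have := hinj z hz
      rw [injective_iff_map_eq_zero] at this
      exact this x hJz
    exact hx this
end

section
/- Let (n, ⟨·,·⟩) be an M-type algebra over ℂ with dim_ℂ n_{-2} = 2 and dim_ℂ n_{-1} ≥ 1, with J-map J. Then there exist a nonzero z ∈ n_{-2} and a nonzero x ∈ n_{-1} with J_z x = 0; consequently there exist a nonzero x ∈ n_{-1} and a codimension-one subspace Π ⊆ n_{-1} such that [x,y] = 0 for all y ∈ Π, i.e. n has a corank-one element. -/
/-- Lemma 3.5: a complex M-type algebra with `dim ℂ n₋₂ = 2` (and `n₋₁ ≠ 0`) has a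
nonzero `z ∈ n₋₂` and a nonzero `x ∈ n₋₁` with `J_z x = 0`; consequently it has a
corank-one element, hence is of infinite type. -/
theorem dim_two_center_infinite_type
    (N1 N2 : Type*) [AddCommGroup N1] [Module ℂ N1] [FiniteDimensional ℂ N1]
    [AddCommGroup N2] [Module ℂ N2] [FiniteDimensional ℂ N2]
    (br : N1 →ₗ[ℂ] N1 →ₗ[ℂ] N2) (halt : ∀ x : N1, br x x = 0)
    (B1 : LinearMap.BilinForm ℂ N1) (B2 : LinearMap.BilinForm ℂ N2)
    (hB1symm : ∀ x y, B1 x y = B1 y x) (hB2symm : ∀ z w, B2 z w = B2 w z)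
    (hB1 : B1.Nondegenerate) (hB2 : B2.Nondegenerate)
    (J : N2 →ₗ[ℂ] Module.End ℂ N1)
    (hJ : ∀ (z : N2) (x y : N1), B1 (J z x) y = B2 z (br x y))
    (hdim2 : Module.finrank ℂ N2 = 2)
    (hdim1 : 1 ≤ Module.finrank ℂ N1) :
    (∃ z : N2, z ≠ 0 ∧ ∃ x : N1, x ≠ 0 ∧ J z x = 0) ∧
    (∃ x : N1, x ≠ 0 ∧ ∃ P : Submodule ℂ N1,
      Module.finrank ℂ (N1 ⧸ P) = 1 ∧ ∀ y ∈ P, br x y = 0) := by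
  haveI : Nontrivial N1 := Module.finrank_pos_iff.mp hdim1
  -- Part 1
  have part1 : ∃ z : N2, z ≠ 0 ∧ ∃ x : N1, x ≠ 0 ∧ J z x = 0 := by
    obtain b := Module.finBasisOfFinrankEq ℂ N2 hdim2
    set z1 := b 0 with hz1
    set z2 := b 1 with hz2
    by_cases hinj : Function.Injective (J z2)
    · -- J z2 invertible; take eigenvector of (J z2)⁻¹ ∘ (J z1)
      have hsurj : Function.Surjective (J z2) := LinearMap.injective_iff_surjective.mp hinj
      let e : N1 ≃ₗ[ℂ] N1 := LinearEquiv.ofBijective (J z2) ⟨hinj, hsurj⟩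
      let C : Module.End ℂ N1 := e.symm.toLinearMap ∘ₗ (J z1)
      obtain ⟨μ, hμ⟩ := Module.End.exists_eigenvalue C
      obtain ⟨x, hx⟩ := hμ.exists_hasEigenvector
      have hxne : x ≠ 0 := hx.right
      have hCx : C x = μ • x := hx.apply_eq_smul
      refine ⟨z1 + (-μ) • z2, ?_, x, hxne, ?_⟩
      · intro h
        have h0 : (1 : ℂ) • z1 + (-μ) • z2 = 0 := by simpa using h
        have hli := b.linearIndependent
        rw [linearIndependent_fin2] at hli
        refine hli.2 μ ?_
        rw [← hz1, ← hz2]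
        linear_combination (norm := module) (-1 : ℂ) • h0
      · have hA : J z1 x = (J z2) (C x) := by
          simp only [C, LinearMap.comp_apply]
          exact (e.apply_symm_apply _).symm
        have : J (z1 + (-μ) • z2) x = J z1 x + (-μ) • (J z2 x) := by
          simp [map_add, map_smul]
        rw [this, hA, hCx, map_smul]
        simp [neg_smul]
    · -- J z2 has nontrivial kernel
      have hker : LinearMap.ker (J z2) ≠ ⊥ := by
        rwa [Ne, LinearMap.ker_eq_bot]
      obtain ⟨x, hxmem, hxne⟩ := Submodule.exists_mem_ne_zero_of_ne_bot hker
      exact ⟨z2, b.ne_zero 1, x, hxne, hxmem⟩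
  refine ⟨part1, ?_⟩
  obtain ⟨z, hz, x, hx, hJzx⟩ := part1
  -- the range of `br x` lies in the hyperplane `ker (B2 z)`
  have horth : ∀ y : N1, B2 z (br x y) = 0 := by
    intro y
    have := hJ z x y
    rw [hJzx] at this
    simpa using this.symm
  -- a helper: for a linear map `f : N1 →ₗ[ℂ] ℂ` with `f ≠ 0`, its kernel has
  -- one-dimensional quotient
  have quot_of_ne_zero : ∀ (f : N1 →ₗ[ℂ] ℂ), f ≠ 0 →
      Module.finrank ℂ (N1 ⧸ LinearMap.ker f) = 1 := by
    intro f hf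
    have hr : LinearMap.range f = ⊤ := by
      rcases eq_bot_or_eq_top (LinearMap.range f) with h | h
      · exact absurd (LinearMap.range_eq_bot.mp h) hf
      · exact h
    have := (LinearMap.quotKerEquivRange f).finrank_eq
    rw [this, hr]
    simp [Module.finrank_self]
  by_cases hbr : br x = 0
  · -- br x = 0: take the kernel of the nonzero functional B1 x
    have hB1x : B1 x ≠ 0 := by
      intro h
      exact hx (hB1.1 x (fun n => by rw [h]; rfl))
    refine ⟨x, hx, LinearMap.ker (B1 x), quot_of_ne_zero _ hB1x, ?_⟩
    intro y _
    rw [hbr]; rfl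
  · -- br x ≠ 0: take P = ker (br x); its quotient is the range, which has dim 1
    refine ⟨x, hx, LinearMap.ker (br x), ?_, fun y hy => hy⟩
    have hqe := (LinearMap.quotKerEquivRange (br x)).finrank_eq
    rw [hqe]
    -- range (br x) ≤ ker (B2 z), a proper submodule of the 2-dim N2
    have hle : LinearMap.range (br x) ≤ LinearMap.ker (B2 z) := by
      rintro w ⟨y, rfl⟩
      exact horth y
    have hB2z : B2 z ≠ 0 := by
      intro h
      exact hz (hB2.1 z (fun n => by rw [h]; rfl))
    have hklt : LinearMap.ker (B2 z) < ⊤ := by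
      rw [lt_top_iff_ne_top]
      intro h
      exact hB2z (LinearMap.ker_eq_top.mp h)
    have hlt := Submodule.finrank_lt (K := ℂ) hklt.ne
    rw [hdim2] at hlt
    have hle1 : Module.finrank ℂ (LinearMap.range (br x)) ≤
        Module.finrank ℂ (LinearMap.ker (B2 z)) := Submodule.finrank_mono hle
    have hub : Module.finrank ℂ (LinearMap.range (br x)) ≤ 1 := by omega
    have hne0 : Module.finrank ℂ (LinearMap.range (br x)) ≠ 0 := by
      intro h
      exact hbr (LinearMap.range_eq_bot.mp (Submodule.finrank_eq_zero.mp h))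
    omega
end

section
/- Let V be a vector space over a field of characteristic ≠ 2, and let J_1, J_2, J_3 be invertible endomorphisms of V such that J_i J_j = σ_{ij} J_j J_i for all i ≠ j in {1,2,3}, where each σ_{ij} ∈ {−1, 1} and σ_{12} σ_{13} σ_{23} = −1. If x ∈ V and scalars s_1, s_2 satisfy J_1 x = s_1 J_3 x and J_2 x = s_2 J_3 x, then x = 0. -/
/-- Core linear-algebra step in the proof of Theorem 3.6: three invertible operators
`J₁, J₂, J₃` which pairwise commute or anticommute with signs `σ₁₂ σ₁₃ σ₂₃ = −1`
(condition (C)) admit no common rank-one direction: if `J₁ x = s₁ J₃ x` and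
`J₂ x = s₂ J₃ x` then `x = 0`. -/
theorem conditionC_no_common_direction
    (𝕜 : Type*) [Field 𝕜] (h2 : (2 : 𝕜) ≠ 0)
    (V : Type*) [AddCommGroup V] [Module 𝕜 V]
    (J1 J2 J3 : Module.End 𝕜 V)
    (hb1 : Function.Bijective ⇑J1) (hb2 : Function.Bijective ⇑J2)
    (hb3 : Function.Bijective ⇑J3)
    (σ12 σ13 σ23 : 𝕜)
    (hσ12 : σ12 = 1 ∨ σ12 = -1) (hσ13 : σ13 = 1 ∨ σ13 = -1) (hσ23 : σ23 = 1 ∨ σ23 = -1)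
    (hprod : σ12 * σ13 * σ23 = -1)
    (h12 : J1 * J2 = σ12 • (J2 * J1))
    (h13 : J1 * J3 = σ13 • (J3 * J1))
    (h23 : J2 * J3 = σ23 • (J3 * J2))
    (x : V) (s1 s2 : 𝕜)
    (hx1 : J1 x = s1 • J3 x) (hx2 : J2 x = s2 • J3 x) :
    x = 0 := by
  by_contra hx
  -- basic nonvanishing facts
  have hJ : ∀ (J : Module.End 𝕜 V), Function.Bijective ⇑J → ∀ v : V, v ≠ 0 → J v ≠ 0 := by
    intro J hb v hv h
    exact hv (hb.injective (by simpa using h))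
  have hJ3x : J3 x ≠ 0 := hJ J3 hb3 x hx
  have hJ33x : J3 (J3 x) ≠ 0 := hJ J3 hb3 _ hJ3x
  have hs1 : s1 ≠ 0 := by
    intro h
    apply hJ J1 hb1 x hx
    rw [hx1, h, zero_smul]
  have hs2 : s2 ≠ 0 := by
    intro h
    apply hJ J2 hb2 x hx
    rw [hx2, h, zero_smul]
  -- commutation relations applied to vectors
  have c12 : ∀ v : V, J1 (J2 v) = σ12 • J2 (J1 v) := by
    intro v
    have := congrArg (fun f : Module.End 𝕜 V => f v) h12
    simpa using this
  have c13 : ∀ v : V, J1 (J3 v) = σ13 • J3 (J1 v) := by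
    intro v
    have := congrArg (fun f : Module.End 𝕜 V => f v) h13
    simpa using this
  have c23 : ∀ v : V, J2 (J3 v) = σ23 • J3 (J2 v) := by
    intro v
    have := congrArg (fun f : Module.End 𝕜 V => f v) h23
    simpa using this
  -- expand J1 (J2 x) two ways
  have e1 : J1 (J2 x) = (σ13 * s1 * s2) • J3 (J3 x) := by
    rw [hx2, map_smul, c13, hx1, map_smul, smul_smul, smul_smul]
    congr 1; ring
  have e2 : J1 (J2 x) = (σ12 * σ23 * s1 * s2) • J3 (J3 x) := by
    rw [c12, hx1, map_smul, c23, hx2, map_smul, smul_smul, smul_smul, smul_smul]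
    congr 1; ring
  have key : σ13 * s1 * s2 = σ12 * σ23 * s1 * s2 := by
    by_contra hne
    have : (σ13 * s1 * s2 - (σ12 * σ23 * s1 * s2)) • J3 (J3 x) = 0 := by
      rw [sub_smul, ← e1, ← e2, sub_self]
    rcases smul_eq_zero.mp this with h | h
    · exact hne (sub_eq_zero.mp h)
    · exact hJ33x h
  have hσ : σ13 = σ12 * σ23 :=
    mul_right_cancel₀ hs1 (mul_right_cancel₀ hs2 key)
  have h1 : (1 : 𝕜) = -1 := by
    rw [hσ] at hprod
    rcases hσ12 with h | h <;> rcases hσ23 with h' | h' <;>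
      simp [h, h'] at hprod <;> exact hprod
  apply h2
  linear_combination h1
end

section
/- Let (n, ⟨·,·⟩) be an M-type algebra over ℂ with J-map J, and suppose n_{-2} has a basis z_1, …, z_k with k ≥ 3, ⟨z_i, z_j⟩_{n_{-2}} = δ_{ij}, such that the Clifford relations J_{z_i} J_{z_j} + J_{z_j} J_{z_i} = −2 δ_{ij} Id_{n_{-1}} hold for all i, j. Then for every nonzero x ∈ n_{-1} the subspace span{J_z x : z ∈ n_{-2}} has dimension at least 2; equivalently, n has no corank-one element, so n is rigid by the corank one criterion. -/
/-- Corollary 3.7 (complexified content): if the J-map of an M-type algebra over ℂ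
satisfies the Clifford relations with respect to an orthonormal basis `z₁, …, z_k` of
`n₋₂` with `k ≥ 3`, then for every nonzero `x ∈ n₋₁` the span of `{J_z x : z ∈ n₋₂}`
has dimension at least 2; hence `n` has no corank-one element and is rigid. -/
theorem pseudo_H_type_rigid
    (N1 N2 : Type*) [AddCommGroup N1] [Module ℂ N1] [FiniteDimensional ℂ N1]
    [AddCommGroup N2] [Module ℂ N2] [FiniteDimensional ℂ N2]
    (br : N1 →ₗ[ℂ] N1 →ₗ[ℂ] N2) (halt : ∀ x : N1, br x x = 0)
    (B1 : LinearMap.BilinForm ℂ N1) (B2 : LinearMap.BilinForm ℂ N2)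
    (hB1symm : ∀ x y, B1 x y = B1 y x) (hB2symm : ∀ z w, B2 z w = B2 w z)
    (hB1 : B1.Nondegenerate) (hB2 : B2.Nondegenerate)
    (J : N2 →ₗ[ℂ] Module.End ℂ N1)
    (hJ : ∀ (z : N2) (x y : N1), B1 (J z x) y = B2 z (br x y))
    (k : ℕ) (hk : 3 ≤ k) (b : Module.Basis (Fin k) ℂ N2)
    (hortho : ∀ i j, B2 (b i) (b j) = if i = j then 1 else 0)
    (hCl : ∀ i j, J (b i) * J (b j) + J (b j) * J (b i) =
      (if i = j then (-2 : ℂ) else 0) • (1 : Module.End ℂ N1)) :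
    ∀ x : N1, x ≠ 0 →
      2 ≤ Module.finrank ℂ ↥(Submodule.span ℂ (Set.range fun z : N2 => J z x)) := by
  intro x hx
  by_contra hlt
  push_neg at hlt
  have hle : Module.finrank ℂ ↥(Submodule.span ℂ (Set.range fun z : N2 => J z x)) ≤ 1 := by
    omega
  set S := Submodule.span ℂ (Set.range fun z : N2 => J z x) with hSdef
  let i0 : Fin k := ⟨0, by omega⟩
  let i1 : Fin k := ⟨1, by omega⟩
  let i2 : Fin k := ⟨2, by omega⟩
  have h01 : i0 ≠ i1 := by simp [i0, i1, Fin.ext_iff]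
  have h12 : i1 ≠ i2 := by simp [i1, i2, Fin.ext_iff]
  -- squares
  have hsq : ∀ i : Fin k, J (b i) (J (b i) x) = -x := by
    intro i
    have h := congrArg (fun f : Module.End ℂ N1 => f x) (hCl i i)
    simp only [LinearMap.add_apply, Module.End.mul_apply, eq_self_iff_true, if_true,
      LinearMap.smul_apply, Module.End.one_apply] at h
    have h2 : (2 : ℂ) • J (b i) (J (b i) x) = (2 : ℂ) • (-x) := by
      rw [two_smul, h]
      module
    exact smul_right_injective N1 (by norm_num) h2
  -- anticommutation
  have hanti : ∀ i j : Fin k, i ≠ j → J (b i) (J (b j) x) = - J (b j) (J (b i) x) := by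
    intro i j hij
    have h := congrArg (fun f : Module.End ℂ N1 => f x) (hCl i j)
    simp only [LinearMap.add_apply, Module.End.mul_apply, if_neg hij,
      LinearMap.smul_apply, Module.End.one_apply, zero_smul] at h
    exact eq_neg_of_add_eq_zero_left h
  have hvmem : ∀ i : Fin k, J (b i) x ∈ S := fun i =>
    Submodule.subset_span ⟨b i, rfl⟩
  have hv0 : J (b i0) x ≠ 0 := by
    intro h
    apply hx
    have := hsq i0
    rw [h] at this
    simpa using this.symm
  have hspan : Submodule.span ℂ {J (b i0) x} = S := by
    apply Submodule.eq_of_le_of_finrank_le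
    · rw [Submodule.span_le]
      intro y hy
      rcases hy with rfl
      exact hvmem i0
    · rw [finrank_span_singleton hv0]
      exact hle
  have hmem : ∀ i : Fin k, ∃ c : ℂ, c • J (b i0) x = J (b i) x := by
    intro i
    rw [← Submodule.mem_span_singleton, hspan]
    exact hvmem i
  obtain ⟨c1, hc1⟩ := hmem i1
  obtain ⟨c2, hc2⟩ := hmem i2
  -- J (b i1) (J (b i0) x) = c1 • x
  have key : ∀ (i : Fin k) (c : ℂ), i0 ≠ i → c • J (b i0) x = J (b i) x →
      J (b i) (J (b i0) x) = c • x := by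
    intro i c h0i hc
    have : J (b i) (J (b i0) x) = - J (b i0) (J (b i) x) := hanti i i0 (Ne.symm h0i)
    rw [this, ← hc, map_smul, hsq i0]
    simp
  have k1 : J (b i1) (J (b i0) x) = c1 • x := key i1 c1 h01 hc1
  have k2 : J (b i2) (J (b i0) x) = c2 • x := key i2 c2 (by simp [i0, i2, Fin.ext_iff]) hc2
  -- c1 ^ 2 = -1
  have hcsq : ∀ (i : Fin k) (c : ℂ), c • J (b i0) x = J (b i) x →
      J (b i) (J (b i0) x) = c • x → c * c = -1 := by
    intro i c hc hk'
    have h1 : J (b i) (J (b i) x) = (c * c) • x := by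
      rw [← hc, map_smul, hk', smul_smul]
    rw [hsq i] at h1
    have h2 : (c * c) • x = (-1 : ℂ) • x := by rw [← h1]; simp
    exact smul_left_injective ℂ hx h2
  have hc1sq : c1 * c1 = -1 := hcsq i1 c1 hc1 k1
  have hc2sq : c2 * c2 = -1 := hcsq i2 c2 hc2 k2
  -- final contradiction using anticommutation of i1, i2
  have e1 : J (b i1) (J (b i2) x) = (c2 * c1) • x := by
    rw [← hc2, map_smul, k1, smul_smul]
  have e2 : J (b i2) (J (b i1) x) = (c1 * c2) • x := by
    rw [← hc1, map_smul, k2, smul_smul]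
  have := hanti i1 i2 h12
  rw [e1, e2] at this
  have h0 : (c2 * c1 + c1 * c2) • x = 0 := by
    rw [add_smul, this]; simp
  have hcc : c2 * c1 + c1 * c2 = 0 := by
    by_contra hne
    exact hx (by simpa [hne] using smul_eq_zero.mp h0)
  have : c1 * c2 = 0 := by linear_combination hcc / 2
  rcases mul_eq_zero.mp this with h | h <;> simp [h] at hc1sq hc2sq
end

section
/- Let (n, ⟨·,·⟩) be an M-type algebra over ℂ with J-map J, and suppose n_{-2} has a basis z_1, …, z_k such that J_{z_i}^2 = ε_i Id_{n_{-1}} with ε_i ∈ {−1, 1} for each i. Suppose there exist a nonzero x ∈ n_{-1} and a codimension-one subspace L ⊆ n_{-2} with J_z x = 0 for all z ∈ L. Then x is a common eigenvector of all operators J_z J_w, z, w ∈ n_{-2}: for all z, w ∈ n_{-2} there is a scalar c(z,w) ∈ ℂ with J_z J_w x = c(z,w) x. -/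
/-- Corollary 3.8: for a (complexified) pseudo J-type algebra — the J-map satisfies
`J_{z_i}² = ε_i Id`, `ε_i = ±1`, on a basis of `n₋₂` — if there is a nonzero `x ∈ n₋₁`
and a codimension-one subspace `L ⊆ n₋₂` with `J_L x = 0` (the corank one criterion for
infinite type), then `x` is a common eigenvector of all the operators `J_z J_w`. -/
theorem infinite_type_common_eigenvector
    (N1 N2 : Type*) [AddCommGroup N1] [Module ℂ N1] [FiniteDimensional ℂ N1]
    [AddCommGroup N2] [Module ℂ N2] [FiniteDimensional ℂ N2]
    (br : N1 →ₗ[ℂ] N1 →ₗ[ℂ] N2) (halt : ∀ x : N1, br x x = 0)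
    (B1 : LinearMap.BilinForm ℂ N1) (B2 : LinearMap.BilinForm ℂ N2)
    (hB1symm : ∀ x y, B1 x y = B1 y x) (hB2symm : ∀ z w, B2 z w = B2 w z)
    (hB1 : B1.Nondegenerate) (hB2 : B2.Nondegenerate)
    (J : N2 →ₗ[ℂ] Module.End ℂ N1)
    (hJ : ∀ (z : N2) (x y : N1), B1 (J z x) y = B2 z (br x y))
    (k : ℕ) (b : Module.Basis (Fin k) ℂ N2)
    (ε : Fin k → ℂ) (hε : ∀ i, ε i = 1 ∨ ε i = -1)
    (hsq : ∀ i, J (b i) * J (b i) = ε i • (1 : Module.End ℂ N1))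
    (x : N1) (hx : x ≠ 0)
    (L : Submodule ℂ N2) (hL : Module.finrank ℂ (N2 ⧸ L) = 1)
    (hLx : ∀ z ∈ L, J z x = 0) :
    ∀ z w : N2, ∃ c : ℂ, J z (J w x) = c • x := by
  -- first get z₀ ∉ L
  have hLne : L ≠ ⊤ := by
    intro h
    subst h
    have hsub : Subsingleton (N2 ⧸ (⊤ : Submodule ℂ N2)) :=
      Submodule.Quotient.subsingleton_iff.mpr rfl
    have : Module.finrank ℂ (N2 ⧸ (⊤ : Submodule ℂ N2)) = 0 :=
      Module.finrank_zero_of_subsingleton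
    omega
  obtain ⟨z₀, hz₀⟩ : ∃ z₀, z₀ ∉ L := by
    by_contra h
    push_neg at h
    exact hLne (Submodule.eq_top_iff'.mpr h)
  have hmk : (L.mkQ z₀ : N2 ⧸ L) ≠ 0 := by
    simpa [Submodule.Quotient.mk_eq_zero] using hz₀
  have hspan : Submodule.span ℂ {L.mkQ z₀} = ⊤ :=
    (finrank_eq_one_iff_of_nonzero (L.mkQ z₀) hmk).mp hL
  -- every w decomposes as a • z₀ + (element of L)
  have hdec : ∀ w : N2, ∃ a : ℂ, w - a • z₀ ∈ L := by
    intro w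
    have : L.mkQ w ∈ Submodule.span ℂ {L.mkQ z₀} := hspan ▸ Submodule.mem_top
    obtain ⟨a, ha⟩ := Submodule.mem_span_singleton.mp this
    refine ⟨a, ?_⟩
    have h2 : L.mkQ (w - a • z₀) = 0 := by
      rw [map_sub, map_smul, ← ha, sub_self]
    rwa [Submodule.mkQ_apply, Submodule.Quotient.mk_eq_zero] at h2
  set y : N1 := J z₀ x with hy
  -- every J w x is a multiple of y
  have key : ∀ w : N2, ∃ a : ℂ, J w x = a • y := by
    intro w
    obtain ⟨a, ha⟩ := hdec w
    refine ⟨a, ?_⟩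
    have h0 : J (w - a • z₀) x = 0 := hLx _ ha
    have : J w x - a • (J z₀ x) = 0 := by
      simpa [map_sub, map_smul, LinearMap.sub_apply, LinearMap.smul_apply] using h0
    rw [hy]
    linear_combination (norm := module) this
  -- each J (b i) y is a multiple of x
  have keyb : ∀ i, ∃ c : ℂ, J (b i) y = c • x := by
    intro i
    obtain ⟨a, ha⟩ := key (b i)
    have hsq' : J (b i) (J (b i) x) = ε i • x := by
      have := congrArg (fun (f : Module.End ℂ N1) => f x) (hsq i)
      simpa [Module.End.mul_apply] using this
    rw [ha, map_smul] at hsq'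
    have haa : a ≠ 0 := by
      intro h0
      rw [h0, zero_smul] at hsq'
      have : x = 0 := by
        rcases hε i with h | h <;> rw [h] at hsq' <;>
          simpa using hsq'.symm
      exact hx this
    refine ⟨ε i / a, ?_⟩
    rw [div_eq_mul_inv, mul_comm, mul_smul, ← hsq', inv_smul_smul₀ haa]
  -- hence J z y is a multiple of x for every z
  have keyz : ∀ z : N2, ∃ c : ℂ, J z y = c • x := by
    intro z
    have hmem : ∀ z : N2, J z y ∈ Submodule.span ℂ {x} → True := fun _ _ => trivial
    have hz : z ∈ Submodule.span ℂ (Set.range b) := by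
      rw [b.span_eq]; exact Submodule.mem_top
    have : J z y ∈ Submodule.span ℂ {x} := by
      induction hz using Submodule.span_induction with
      | mem w hw =>
          obtain ⟨i, rfl⟩ := hw
          obtain ⟨c, hc⟩ := keyb i
          rw [hc]
          exact Submodule.smul_mem _ _ (Submodule.mem_span_singleton_self x)
      | zero => simp
      | add u v _ _ hu hv =>
          rw [map_add]
          exact Submodule.add_mem _ hu hv
      | smul a u _ hu =>
          rw [map_smul]
          exact Submodule.smul_mem _ _ hu
    exact Submodule.mem_span_singleton.mp this |>.imp fun c hc => hc.symm
  -- conclusion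
  intro z w
  obtain ⟨a, ha⟩ := key w
  obtain ⟨c, hc⟩ := keyz z
  refine ⟨a * c, ?_⟩
  rw [ha, map_smul, hc, smul_smul]
end

section
/- Let (n, ⟨·,·⟩) be an M-type algebra over ℂ with J-map J, and suppose n_{-2} has a basis z_1, …, z_k such that J_{z_i}^2 = ε_i Id_{n_{-1}} with ε_i ∈ {−1, 1} for each i. If there exist three linearly independent vectors w_1, w_2, w_3 ∈ n_{-2} such that the commutators [J_{w_1}, J_{w_2}], [J_{w_1}, J_{w_3}], [J_{w_2}, J_{w_3}] ∈ End(n_{-1}) have no common eigenvector, then there is no nonzero x ∈ n_{-1} and codimension-one subspace L ⊆ n_{-2} with J_z x = 0 for all z ∈ L; equivalently, n has no corank-one element, so n is rigid by the corank one criterion. -/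
/-- Remark after Corollary 3.8: for a (complexified) pseudo J-type algebra, if there are
three linearly independent vectors `w₁, w₂, w₃ ∈ n₋₂` such that the commutators
`[J_{w₁}, J_{w₂}]`, `[J_{w₁}, J_{w₃}]`, `[J_{w₂}, J_{w₃}]` have no common eigenvector,
then `n` has no corank-one element, hence is rigid. -/
theorem no_common_eigenvector_rigid
    (N1 N2 : Type*) [AddCommGroup N1] [Module ℂ N1] [FiniteDimensional ℂ N1]
    [AddCommGroup N2] [Module ℂ N2] [FiniteDimensional ℂ N2]
    (br : N1 →ₗ[ℂ] N1 →ₗ[ℂ] N2) (halt : ∀ x : N1, br x x = 0)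
    (B1 : LinearMap.BilinForm ℂ N1) (B2 : LinearMap.BilinForm ℂ N2)
    (hB1symm : ∀ x y, B1 x y = B1 y x) (hB2symm : ∀ z w, B2 z w = B2 w z)
    (hB1 : B1.Nondegenerate) (hB2 : B2.Nondegenerate)
    (J : N2 →ₗ[ℂ] Module.End ℂ N1)
    (hJ : ∀ (z : N2) (x y : N1), B1 (J z x) y = B2 z (br x y))
    (k : ℕ) (b : Module.Basis (Fin k) ℂ N2)
    (ε : Fin k → ℂ) (hε : ∀ i, ε i = 1 ∨ ε i = -1)
    (hsq : ∀ i, J (b i) * J (b i) = ε i • (1 : Module.End ℂ N1))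
    (w1 w2 w3 : N2) (hind : LinearIndependent ℂ ![w1, w2, w3])
    (hnoeig : ¬ ∃ v : N1, v ≠ 0 ∧ ∃ c1 c2 c3 : ℂ,
      (J w1 * J w2 - J w2 * J w1) v = c1 • v ∧
      (J w1 * J w3 - J w3 * J w1) v = c2 • v ∧
      (J w2 * J w3 - J w3 * J w2) v = c3 • v) :
    ¬ ∃ x : N1, x ≠ 0 ∧ ∃ L : Submodule ℂ N2,
      Module.finrank ℂ (N2 ⧸ L) = 1 ∧ ∀ z ∈ L, J z x = 0 := by
  rintro ⟨x, hx, L, hL, hLx⟩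
  -- k ≥ 1
  have hk : 0 < k := by
    have h1 : Module.finrank ℂ (N2 ⧸ L) ≤ Module.finrank ℂ N2 :=
      Submodule.finrank_quotient_le L
    have h2 : Module.finrank ℂ N2 = k := by
      simpa using Module.finrank_eq_card_basis b
    omega
  have hεne : ∀ i, ε i ≠ 0 := by
    intro i; rcases hε i with h | h <;> simp [h]
  have hJbx : ∀ i : Fin k, J (b i) (J (b i) x) = ε i • x := by
    intro i
    have := congrArg (fun f : Module.End ℂ N1 => f x) (hsq i)
    simpa using this
  set i0 : Fin k := ⟨0, hk⟩ with hi0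
  set y : N1 := J (b i0) x with hy
  have hy0 : y ≠ 0 := by
    intro h
    have h2 := hJbx i0
    rw [← hy, h, map_zero] at h2
    have : ε i0 • x = 0 := h2.symm
    rcases smul_eq_zero.1 this with h3 | h3
    · exact hεne i0 h3
    · exact hx h3
  -- the map z ↦ J z x
  set T : N2 →ₗ[ℂ] N1 := (LinearMap.applyₗ x).comp J with hT
  have hTapp : ∀ z, T z = J z x := fun z => rfl
  have hker : L ≤ LinearMap.ker T := by
    intro z hz
    simp [LinearMap.mem_ker, hTapp, hLx z hz]
  have hrangeT : LinearMap.range T = Submodule.span ℂ {y} := by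
    have hle : Submodule.span ℂ {y} ≤ LinearMap.range T := by
      rw [Submodule.span_le, Set.singleton_subset_iff]
      exact ⟨b i0, rfl⟩
    refine (Submodule.eq_of_le_of_finrank_le hle ?_).symm
    have h1 : LinearMap.range T = LinearMap.range (L.liftQ T hker) :=
      (Submodule.range_liftQ L T hker).symm
    rw [h1, finrank_span_singleton hy0]
    calc Module.finrank ℂ (LinearMap.range (L.liftQ T hker))
        ≤ Module.finrank ℂ (N2 ⧸ L) := (L.liftQ T hker).finrank_range_le
      _ = 1 := hL
  have hrange : ∀ z : N2, ∃ c : ℂ, J z x = c • y := by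
    intro z
    have : J z x ∈ LinearMap.range T := ⟨z, rfl⟩
    rw [hrangeT] at this
    exact (Submodule.mem_span_singleton.1 this).imp fun c hc => hc.symm
  -- J z y ∈ span {x}
  have hJy : ∀ z : N2, ∃ d : ℂ, J z y = d • x := by
    have hbasis : ∀ i : Fin k, J (b i) y ∈ Submodule.span ℂ {x} := by
      intro i
      obtain ⟨c, hc⟩ := hrange (b i)
      have hcne : c ≠ 0 := by
        intro h0
        rw [h0, zero_smul] at hc
        have h2 := hJbx i
        rw [hc, map_zero] at h2
        rcases smul_eq_zero.1 h2.symm with h3 | h3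
        · exact hεne i h3
        · exact hx h3
      have h2 := hJbx i
      rw [hc, map_smul] at h2
      have : J (b i) y = (c⁻¹ * ε i) • x := by
        have := congrArg (fun v => c⁻¹ • v) h2
        simpa [smul_smul, inv_mul_cancel₀ hcne, mul_comm] using this
      rw [this]
      exact Submodule.smul_mem _ _ (Submodule.mem_span_singleton_self x)
    intro z
    have htop : Submodule.span ℂ (Set.range b) ≤
        (Submodule.span ℂ {x}).comap ((LinearMap.applyₗ y).comp J) := by
      rw [Submodule.span_le]
      rintro _ ⟨i, rfl⟩
      exact hbasis i
    have hz : z ∈ (Submodule.span ℂ {x}).comap ((LinearMap.applyₗ y).comp J) := by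
      apply htop
      rw [b.span_eq]
      exact Submodule.mem_top
    exact (Submodule.mem_span_singleton.1 hz).imp fun d hd => hd.symm
  obtain ⟨c1, hc1⟩ := hrange w1
  obtain ⟨c2, hc2⟩ := hrange w2
  obtain ⟨c3, hc3⟩ := hrange w3
  obtain ⟨d1, hd1⟩ := hJy w1
  obtain ⟨d2, hd2⟩ := hJy w2
  obtain ⟨d3, hd3⟩ := hJy w3
  refine hnoeig ⟨x, hx, c2 * d1 - c1 * d2, c3 * d1 - c1 * d3, c3 * d2 - c2 * d3,
    ?_, ?_, ?_⟩ <;>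
    simp only [LinearMap.sub_apply, Module.End.mul_apply, hc1, hc2, hc3,
      map_smul, hd1, hd2, hd3, smul_smul, sub_smul]
end

section
/- Let V be a nonzero vector space over ℂ, Z a finite-dimensional complex vector space with basis z_1, …, z_k, k ≥ 2, and J : Z → End(V) a linear map with J_{z_i}^2 = ε_i Id_V, ε_i ∈ {−1, 1}, for each i. Let x ∈ V be nonzero and suppose: (a) for all z, w ∈ Z there is a scalar μ(z,w) ∈ ℂ with J_z J_w x = μ(z,w) x; (b) for every pair i ≠ j there exists z''_{ij} ∈ Z with J_{z_i} J_{z_j} x = J_{z''_{ij}} x. Then for every z ∈ Z there is a scalar λ_z ∈ ℂ with J_z x = λ_z x, i.e. x is a common eigenvector of all the operators J_z. -/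
/-- Eigenvector-propagation step in the proof of Theorem 4.4: if `x ≠ 0` is a common
eigenvector of all products `J_z J_w` and the general J²-condition holds on basis pairs,
then `x` is an eigenvector of every `J_z`. -/
theorem eigenvector_propagation
    (V : Type*) [AddCommGroup V] [Module ℂ V] [Nontrivial V]
    (Z : Type*) [AddCommGroup Z] [Module ℂ Z] [FiniteDimensional ℂ Z]
    (k : ℕ) (hk : 2 ≤ k) (b : Module.Basis (Fin k) ℂ Z)
    (J : Z →ₗ[ℂ] Module.End ℂ V)
    (ε : Fin k → ℂ) (hε : ∀ i, ε i = 1 ∨ ε i = -1)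
    (hsq : ∀ i, J (b i) * J (b i) = ε i • (1 : Module.End ℂ V))
    (x : V) (hx : x ≠ 0)
    (ha : ∀ z w : Z, ∃ μ : ℂ, J z (J w x) = μ • x)
    (hb : ∀ i j : Fin k, i ≠ j → ∃ z'' : Z, J (b i) (J (b j) x) = J z'' x) :
    ∀ z : Z, ∃ lam : ℂ, J z x = lam • x := by
  have hbasis : ∀ j : Fin k, ∃ lam : ℂ, J (b j) x = lam • x := by
    intro j
    obtain ⟨i, hij⟩ : ∃ i : Fin k, i ≠ j := by
      rcases Nat.lt_or_ge j.val 1 with h | h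
      · exact ⟨⟨1, by omega⟩, by simp [Fin.ext_iff]; omega⟩
      · exact ⟨⟨0, by omega⟩, by simp [Fin.ext_iff]; omega⟩
    obtain ⟨z'', hz⟩ := hb i j hij
    obtain ⟨μ, hμ⟩ := ha (b i) z''
    have h1 : J (b i) (J (b i) (J (b j) x)) = ε i • J (b j) x := by
      have := congrArg (fun f : Module.End ℂ V => f (J (b j) x)) (hsq i)
      simpa using this
    rw [hz, hμ] at h1
    have hεne : ε i ≠ 0 := by rcases hε i with h | h <;> simp [h]
    refine ⟨(ε i)⁻¹ * μ, ?_⟩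
    rw [mul_smul, h1, smul_smul, inv_mul_cancel₀ hεne, one_smul]
  intro z
  choose lam hlam using hbasis
  refine ⟨∑ i, b.repr z i * lam i, ?_⟩
  conv_lhs => rw [← b.sum_repr z]
  rw [map_sum, LinearMap.sum_apply, Finset.sum_smul]
  refine Finset.sum_congr rfl fun i _ => ?_
  rw [map_smul, LinearMap.smul_apply, hlam, smul_smul, mul_smul]
end

section
/- Let (n, ⟨·,·⟩) be an M-type algebra over ℂ with J-map J. Suppose n_{-2} has a basis z_1, …, z_k with k ≥ 3 and ⟨z_i, z_j⟩_{n_{-2}} = δ_{ij}, such that J_{z_i}^2 = ε_i Id_{n_{-1}} with ε_i ∈ {−1, 1} for each i, and suppose the general J²-condition holds: for every x ∈ n_{-1} and every pair z, z' ∈ n_{-2} with ⟨z, z'⟩_{n_{-2}} = 0 there exists z'' ∈ n_{-2} with J_z J_{z'} x = J_{z''} x. Then there is no nonzero x ∈ n_{-1} and codimension-one subspace L ⊆ n_{-2} with J_z x = 0 for all z ∈ L; equivalently, n has no corank-one element, so n is rigid by the corank one criterion. -/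
/-- Theorem 4.4 (complexified content): a pseudo J-type algebra with `dim n₋₂ ≥ 3`
satisfying the general J²-condition has no corank-one element, hence is rigid by the
corank one criterion. -/
theorem general_J2_condition_rigid
    (N1 N2 : Type*) [AddCommGroup N1] [Module ℂ N1] [FiniteDimensional ℂ N1]
    [AddCommGroup N2] [Module ℂ N2] [FiniteDimensional ℂ N2]
    (br : N1 →ₗ[ℂ] N1 →ₗ[ℂ] N2) (halt : ∀ x : N1, br x x = 0)
    (B1 : LinearMap.BilinForm ℂ N1) (B2 : LinearMap.BilinForm ℂ N2)
    (hB1symm : ∀ x y, B1 x y = B1 y x) (hB2symm : ∀ z w, B2 z w = B2 w z)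
    (hB1 : B1.Nondegenerate) (hB2 : B2.Nondegenerate)
    (J : N2 →ₗ[ℂ] Module.End ℂ N1)
    (hJ : ∀ (z : N2) (x y : N1), B1 (J z x) y = B2 z (br x y))
    (k : ℕ) (hk : 3 ≤ k) (b : Module.Basis (Fin k) ℂ N2)
    (hortho : ∀ i j, B2 (b i) (b j) = if i = j then 1 else 0)
    (ε : Fin k → ℂ) (hε : ∀ i, ε i = 1 ∨ ε i = -1)
    (hsq : ∀ i, J (b i) * J (b i) = ε i • (1 : Module.End ℂ N1))
    (hJ2 : ∀ (x : N1) (z z' : N2), B2 z z' = 0 →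
      ∃ z'' : N2, J z (J z' x) = J z'' x) :
    ¬ ∃ x : N1, x ≠ 0 ∧ ∃ L : Submodule ℂ N2,
      Module.finrank ℂ (N2 ⧸ L) = 1 ∧ ∀ z ∈ L, J z x = 0 := by
  rintro ⟨x, hx, L, hL, hLx⟩
  have hεne : ∀ j, ε j ≠ 0 := by
    intro j; rcases hε j with h | h <;> rw [h] <;> norm_num
  -- the bracket is antisymmetric
  have hanti : ∀ a c : N1, br a c = - br c a := by
    intro a c
    have h := halt (a + c)
    simp only [map_add, LinearMap.add_apply, halt a, halt c, zero_add, add_zero] at h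
    exact eq_neg_of_add_eq_zero_right h
  -- each J z is skew-adjoint w.r.t. B1
  have hskew : ∀ (z : N2) (a c : N1), B1 (J z a) c = - B1 a (J z c) := by
    intro z a c
    rw [hJ z a c, hB1symm a (J z c), hJ z c a, hanti a c, map_neg]
  -- Lemma A : for orthogonal z, z', J z y ⟂ J z' y
  have lemA : ∀ (y : N1) (z z' : N2), B2 z z' = 0 → B1 (J z y) (J z' y) = 0 := by
    intro y z z' h
    obtain ⟨z'', hz''⟩ := hJ2 y z z' h
    have h0 : B1 (J z'' y) y = 0 := by
      have h1 := hskew z'' y y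
      have h2 := hB1symm y (J z'' y)
      linear_combination h1 / 2 - h2 / 2
    have h3 : B1 (J z (J z' y)) y = - B1 (J z' y) (J z y) := hskew z (J z' y) y
    rw [hz''] at h3
    rw [hB1symm]
    linear_combination h3 - h0
  -- Lemma B : polarization of Lemma A
  have lemB : ∀ (y y' : N1) (z z' : N2), B2 z z' = 0 →
      B1 (J z y) (J z' y') + B1 (J z y') (J z' y) = 0 := by
    intro y y' z z' h
    have h1 := lemA (y + y') z z' h
    simp only [map_add, LinearMap.add_apply] at h1
    linear_combination h1 - lemA y z z' h - lemA y' z z' h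
  -- a generator of the quotient and the coefficient map
  obtain ⟨e, he, hspan⟩ := finrank_eq_one_iff'.mp hL
  obtain ⟨w, hw⟩ := Submodule.mkQ_surjective L e
  set v : N1 := J w x with hv
  have key : ∀ j : Fin k, ∃ c : ℂ, J (b j) x = c • v := by
    intro j
    obtain ⟨c, hc⟩ := hspan (L.mkQ (b j))
    refine ⟨c, ?_⟩
    have hmem : b j - c • w ∈ L := by
      rw [← Submodule.Quotient.mk_eq_zero, ← Submodule.mkQ_apply]
      rw [map_sub, map_smul, hw, hc, sub_self]
    have h0 := hLx _ hmem
    have hexp : J (b j - c • w) x = J (b j) x - c • J w x := by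
      simp [map_sub, map_smul, LinearMap.sub_apply, LinearMap.smul_apply]
    rw [hexp, sub_eq_zero] at h0
    exact h0
  choose α hα using key
  -- each α j is nonzero and J (b j) v is a multiple of x
  have hstep : ∀ j : Fin k, α j ≠ 0 ∧ J (b j) v = ((α j)⁻¹ * ε j) • x := by
    intro j
    have hsqx : J (b j) (J (b j) x) = ε j • x := by
      have := congrArg (fun f : Module.End ℂ N1 => f x) (hsq j)
      simpa [Module.End.mul_apply, LinearMap.smul_apply, Module.End.one_apply] using this
    rw [hα j, map_smul] at hsqx
    have hαne : α j ≠ 0 := by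
      intro h0
      rw [h0, zero_smul] at hsqx
      exact hx ((smul_eq_zero.mp hsqx.symm).resolve_left (hεne j))
    refine ⟨hαne, ?_⟩
    have h2 := congrArg (fun u => (α j)⁻¹ • u) hsqx
    simp only [smul_smul, inv_mul_cancel₀ hαne, one_smul] at h2
    exact h2
  -- key scalar relation for distinct indices
  have hrel : ∀ j l : Fin k, j ≠ l → α j ^ 2 * ε l + α l ^ 2 * ε j = 0 := by
    intro j l hjl
    have horth : B2 (b j) (b l) = 0 := by rw [hortho]; simp [hjl]
    have hzero : α j • J (b l) v + α l • J (b j) v = 0 := by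
      apply hB1.1
      intro y'
      have hB := lemB x y' (b j) (b l) horth
      rw [hα j, hα l] at hB
      simp only [map_smul, LinearMap.smul_apply, smul_eq_mul] at hB
      have s1 : B1 v (J (b l) y') = - B1 (J (b l) v) y' := by
        linear_combination hskew (b l) v y'
      have s2 : B1 (J (b j) y') v = - B1 (J (b j) v) y' := by
        rw [hskew (b j) y' v, hB1symm y' (J (b j) v)]
      simp only [map_add, LinearMap.add_apply, map_smul, LinearMap.smul_apply,
        smul_eq_mul]
      linear_combination - hB + α j * s1 + α l * s2
    rw [(hstep j).2, (hstep l).2, smul_smul, smul_smul, ← add_smul] at hzero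
    have hs := (smul_eq_zero.mp hzero).resolve_right hx
    have hj := (hstep j).1
    have hl := (hstep l).1
    field_simp at hs
    linear_combination hs
  -- three distinct indices give a contradiction
  have h0 : (0 : ℕ) < k := by omega
  have h1 : (1 : ℕ) < k := by omega
  have h2 : (2 : ℕ) < k := by omega
  set i0 : Fin k := ⟨0, h0⟩
  set i1 : Fin k := ⟨1, h1⟩
  set i2 : Fin k := ⟨2, h2⟩
  have h01 := hrel i0 i1 (Fin.ne_of_val_ne (by norm_num))
  have h02 := hrel i0 i2 (Fin.ne_of_val_ne (by norm_num))
  have h12 := hrel i1 i2 (Fin.ne_of_val_ne (by norm_num))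
  have hfin : α i1 ^ 2 * (ε i0 * ε i2) = 0 := by
    linear_combination (ε i2 / 2) * h01 - (ε i1 / 2) * h02 + (ε i0 / 2) * h12
  exact (mul_ne_zero (pow_ne_zero 2 (hstep i1).1)
    (mul_ne_zero (hεne i0) (hεne i2))) hfin
end

section
/- Let J_1, J_2, J_3 be the 5×5 complex matrices J_1 = [[0,1,0,0,1],[−1,0,0,0,0],[0,0,0,1,0],[0,0,−1,0,0],[−1,0,0,0,0]], J_2 = [[0,0,0,0,0],[0,0,1,0,1],[0,−1,0,0,0],[0,0,0,0,0],[0,−1,0,0,0]], J_3 = [[0,0,0,1,0],[0,0,0,0,1],[0,0,0,0,0],[−1,0,0,0,1],[0,−1,0,−1,0]]. Then for every nonzero x = (x_1,x_2,x_3,x_4,x_5)ᵗ ∈ ℂ⁵, the 5×3 matrix with columns J_1 x, J_2 x, J_3 x has rank at least 2. -/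
open Matrix

/-- The three explicit `5 × 5` matrices from the first proof of Theorem 5.1. -/
def J1mat : Matrix (Fin 5) (Fin 5) ℂ :=
  !![0, 1, 0, 0, 1;
     -1, 0, 0, 0, 0;
     0, 0, 0, 1, 0;
     0, 0, -1, 0, 0;
     -1, 0, 0, 0, 0]

def J2mat : Matrix (Fin 5) (Fin 5) ℂ :=
  !![0, 0, 0, 0, 0;
     0, 0, 1, 0, 1;
     0, -1, 0, 0, 0;
     0, 0, 0, 0, 0;
     0, -1, 0, 0, 0]

def J3mat : Matrix (Fin 5) (Fin 5) ℂ :=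
  !![0, 0, 0, 1, 0;
     0, 0, 0, 0, 1;
     0, 0, 0, 0, 0;
     -1, 0, 0, 0, 1;
     0, -1, 0, -1, 0]

/-- If some `2 × 2` minor of `M` is nonzero then `M` has rank at least 2. -/
lemma two_le_rank_of_minor {m n : Type*} [Fintype m] [Fintype n] [DecidableEq m] [DecidableEq n]
    (M : Matrix m n ℂ) (i1 i2 : m) (j1 j2 : n)
    (h : M i1 j1 * M i2 j2 - M i1 j2 * M i2 j1 ≠ 0) : 2 ≤ M.rank := by
  set P : Matrix (Fin 2) m ℂ := Matrix.of fun a k => if k = ![i1, i2] a then 1 else 0 with hP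
  set Q : Matrix n (Fin 2) ℂ := Matrix.of fun l b => if l = ![j1, j2] b then 1 else 0 with hQ
  have hS : P * M * Q = !![M i1 j1, M i1 j2; M i2 j1, M i2 j2] := by
    ext a b
    fin_cases a <;> fin_cases b <;>
      simp only [hP, hQ, Matrix.mul_apply, Matrix.of_apply, ite_mul, mul_ite, one_mul, mul_one, zero_mul, mul_zero, Finset.sum_ite_eq, Finset.sum_ite_eq', Finset.mem_univ, if_true, Finset.sum_const_zero] <;>
      simp
  have hdet : IsUnit (!![M i1 j1, M i1 j2; M i2 j1, M i2 j2]).det := by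
    rw [Matrix.det_fin_two_of]
    exact isUnit_iff_ne_zero.mpr h
  have hrank : (!![M i1 j1, M i1 j2; M i2 j1, M i2 j2]).rank = 2 := by
    rw [Matrix.rank_of_isUnit _ ((Matrix.isUnit_iff_isUnit_det _).mpr hdet)]
    simp
  calc (2 : ℕ) = (P * M * Q).rank := by rw [hS, hrank]
    _ ≤ (P * M).rank := Matrix.rank_mul_le_left _ _
    _ ≤ M.rank := Matrix.rank_mul_le_right _ _

/-- First proof of Theorem 5.1 (explicit example in bi-dimensions (3,5)): for every
nonzero `x ∈ ℂ⁵` the `5 × 3` matrix with columns `J₁x, J₂x, J₃x` has rank at least 2. -/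
theorem rank_ge_two_of_ne_zero (x : Fin 5 → ℂ) (hx : x ≠ 0) :
    2 ≤ (Matrix.of fun (i : Fin 5) (j : Fin 3) =>
      ![J1mat.mulVec x, J2mat.mulVec x, J3mat.mulVec x] j i).rank := by
  set M : Matrix (Fin 5) (Fin 3) ℂ := Matrix.of fun (i : Fin 5) (j : Fin 3) =>
      ![J1mat.mulVec x, J2mat.mulVec x, J3mat.mulVec x] j i with hM
  by_contra hr
  have key : ∀ (i1 i2 : Fin 5) (j1 j2 : Fin 3),
      M i1 j1 * M i2 j2 - M i1 j2 * M i2 j1 = 0 := by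
    intro i1 i2 j1 j2
    by_contra h
    exact hr (two_le_rank_of_minor M i1 i2 j1 j2 h)
  have hA1 := key 0 1 0 2
  have hA2 := key 0 1 1 2
  have hA3 := key 0 2 0 1
  have hA4 := key 0 2 0 2
  have hA5 := key 0 2 1 2
  have hA6 := key 0 3 0 2
  have hA7 := key 0 4 0 2
  have hA8 := key 1 2 0 1
  have hA9 := key 1 2 0 2
  have hA10 := key 1 2 1 2
  have hA11 := key 1 3 0 1
  have hA12 := key 1 3 0 2
  have hA13 := key 1 3 1 2
  have hA14 := key 1 4 0 1
  simp only [hM, Matrix.of_apply, Matrix.cons_val_zero, Matrix.cons_val_one, Matrix.head_cons,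
    Matrix.cons_val_two, Matrix.tail_cons, Matrix.cons_val_three, Matrix.cons_val_four,
    Matrix.head_fin_const, J1mat, J2mat, J3mat, Matrix.mulVec, dotProduct,
    Fin.sum_univ_five, Matrix.cons_val', Matrix.empty_val', Matrix.cons_val_fin_one]
    at hA1 hA2 hA3 hA4 hA5 hA6 hA7 hA8 hA9 hA10 hA11 hA12 hA13 hA14
  apply hx
  have sq : ∀ y : ℂ, y ^ 2 = 0 → y = 0 := fun y hy => by
    exact pow_eq_zero_iff two_ne_zero |>.mp hy
  have h0 : x 0 = 0 := sq _ (by linear_combination 2*hA1 - hA2 + 2*hA3 - 2*hA5 - hA6 - 2*hA7 + 3*hA9 - hA10 + hA12 - hA13 - hA14)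
  have h1 : x 1 = 0 := sq _ (by linear_combination -hA3 - hA10)
  have h2 : x 2 = 0 := sq _ (by linear_combination hA1 - hA2 + hA3 - hA5 - hA7 + hA8 + hA9 - hA10 + hA11 - hA13 - hA14)
  have h3 : x 3 = 0 := sq _ (by linear_combination -hA4)
  have h4 : x 4 = 0 := sq _ (by linear_combination hA1 + hA3 - hA5 - hA7 + hA9 - hA10)
  funext i
  fin_cases i <;> simp [h0, h1, h2, h3, h4]
end

section
/- Let (n, ⟨·,·⟩) be a real pseudo H-type algebra with J-map J that satisfies the J²-condition. Suppose x ∈ n_{-1} and z, z' ∈ n_{-2} satisfy ⟨z, z'⟩_{n_{-2}} = 0, ⟨z, z⟩_{n_{-2}} ≠ 0, ⟨z', z'⟩_{n_{-2}} ≠ 0, and ⟨J_w x, J_z J_{z'} x⟩_{n_{-1}} = 0 for every w ∈ n_{-2}. Then ⟨x, x⟩_{n_{-1}} = 0. -/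
/-- Criterion (7.2) of the paper: in a real pseudo H-type algebra satisfying the
J²-condition, if `x ∈ n₋₁` and an orthogonal pair `z, z' ∈ n₋₂` of non-null vectors
satisfy `⟨J_w x, J_z J_{z'} x⟩ = 0` for all `w ∈ n₋₂`, then `⟨x, x⟩ = 0`. -/
theorem J2_condition_orthogonality_criterion
    (N1 N2 : Type*) [AddCommGroup N1] [Module ℝ N1] [FiniteDimensional ℝ N1]
    [AddCommGroup N2] [Module ℝ N2] [FiniteDimensional ℝ N2]
    (br : N1 →ₗ[ℝ] N1 →ₗ[ℝ] N2) (halt : ∀ x : N1, br x x = 0)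
    (B1 : LinearMap.BilinForm ℝ N1) (B2 : LinearMap.BilinForm ℝ N2)
    (hB1symm : ∀ x y, B1 x y = B1 y x) (hB2symm : ∀ z w, B2 z w = B2 w z)
    (hB1 : B1.Nondegenerate) (hB2 : B2.Nondegenerate)
    (J : N2 →ₗ[ℝ] Module.End ℝ N1)
    (hJ : ∀ (z : N2) (x y : N1), B1 (J z x) y = B2 z (br x y))
    (hCl : ∀ z w : N2, J z * J w + J w * J z = (-(2 * B2 z w)) • (1 : Module.End ℝ N1))
    (hJ2 : ∀ x : N1, B1 x x ≠ 0 → ∀ z z' : N2, B2 z z' = 0 →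
      ∃ z'' : N2, J z (J z' x) = J z'' x)
    (x : N1) (z z' : N2)
    (horth : B2 z z' = 0) (hz : B2 z z ≠ 0) (hz' : B2 z' z' ≠ 0)
    (hperp : ∀ w : N2, B1 (J w x) (J z (J z' x)) = 0) :
    B1 x x = 0 := by
  by_contra hx
  obtain ⟨z'', hz''⟩ := hJ2 x hx z z' horth
  have hanti : ∀ u v : N1, br u v = - br v u := by
    intro u v
    have h := halt (u + v)
    simp [map_add, halt u, halt v] at h
    exact eq_neg_of_add_eq_zero_right h
  have hskew : ∀ (w : N2) (u v : N1), B1 (J w u) v = - B1 u (J w v) := by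
    intro w u v
    rw [hJ w u v, hanti u v, map_neg, hB1symm u (J w v), hJ w v u]
  have hJJ : ∀ (w : N2) (u : N1), J w (J w u) = (-(B2 w w)) • u := by
    intro w u
    have h := DFunLike.congr_fun (hCl w w) u
    simp only [Module.End.mul_apply, LinearMap.add_apply, LinearMap.smul_apply,
      Module.End.one_apply] at h
    have h2 : (2:ℝ) • J w (J w u) = (2:ℝ) • ((-(B2 w w)) • u) := by
      rw [two_smul, h, smul_smul]
      congr 1
      ring
    exact smul_right_injective _ two_ne_zero h2
  have key : B1 (J z (J z' x)) (J z (J z' x)) = B2 z z * (B2 z' z' * B1 x x) := by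
    rw [hskew z (J z' x) (J z (J z' x)), hJJ z (J z' x), map_smul, smul_eq_mul,
      hskew z' x (J z' x), hJJ z' x, map_smul, smul_eq_mul]
    ring
  have h0 : B1 (J z (J z' x)) (J z (J z' x)) = 0 := by
    have h := hperp z''
    rw [← hz''] at h
    exact h
  rw [h0] at key
  exact mul_ne_zero hz (mul_ne_zero hz' hx) key.symm
end

section
/- Let V be a real vector space and J_1, J_2, J_3 ∈ End(V) satisfying J_1^2 = −Id_V, J_2^2 = J_3^2 = Id_V, together with the relations J_1 = −J_2 J_3, J_2 = −J_1 J_3, J_3 = J_1 J_2 (as endomorphisms of V). For z = (a_1, a_2, a_3) ∈ ℝ³ set J_z = a_1 J_1 + a_2 J_2 + a_3 J_3, and equip ℝ³ with the bilinear form ⟨z, z'⟩_{1,2} = a_1 b_1 − a_2 b_2 − a_3 b_3 for z' = (b_1, b_2, b_3). Then for every pair z, z' ∈ ℝ³ with ⟨z, z'⟩_{1,2} = 0 there exists z'' ∈ ℝ³ such that J_z J_{z'} = J_{z''}; in particular for all x ∈ V, J_z J_{z'} x = J_{z''} x, i.e. the general J²-condition holds. -/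
/-- Relations (7.3)–(7.4) of the paper: for the J-operators of `n^{1,2}` on an isotypic
module (`J₁² = −Id`, `J₂² = J₃² = Id`, `J₁ = −J₂J₃`, `J₂ = −J₁J₃`, `J₃ = J₁J₂`), for
every pair `z, z' ∈ ℝ³` orthogonal with respect to `⟨·,·⟩_{1,2}` there exists `z''` with
`J_z J_{z'} = J_{z''}`: the general J²-condition holds. -/
theorem n12_general_J2_condition
    (V : Type*) [AddCommGroup V] [Module ℝ V]
    (J1 J2 J3 : Module.End ℝ V)
    (hsq1 : J1 * J1 = -1) (hsq2 : J2 * J2 = 1) (hsq3 : J3 * J3 = 1)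
    (h1 : J1 = -(J2 * J3)) (h2 : J2 = -(J1 * J3)) (h3 : J3 = J1 * J2) :
    ∀ z z' : Fin 3 → ℝ,
      z 0 * z' 0 - z 1 * z' 1 - z 2 * z' 2 = 0 →
      ∃ z'' : Fin 3 → ℝ,
        (z 0 • J1 + z 1 • J2 + z 2 • J3) * (z' 0 • J1 + z' 1 • J2 + z' 2 • J3) =
          z'' 0 • J1 + z'' 1 • J2 + z'' 2 • J3 ∧
        ∀ x : V,
          (z 0 • J1 + z 1 • J2 + z 2 • J3) ((z' 0 • J1 + z' 1 • J2 + z' 2 • J3) x) =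
            (z'' 0 • J1 + z'' 1 • J2 + z'' 2 • J3) x := by
  intro z z' hz
  have e12 : J1 * J2 = J3 := h3.symm
  have e23 : J2 * J3 = -J1 := by rw [h1, neg_neg]
  have e13 : J1 * J3 = -J2 := by rw [h2, neg_neg]
  have e21 : J2 * J1 = -J3 := by
    calc J2 * J1 = J2 * (J1 * J3) * J3 := by
          rw [mul_assoc, mul_assoc, hsq3, mul_one]
      _ = -J3 := by rw [e13, mul_neg, hsq2, neg_one_mul]
  have e31 : J3 * J1 = J2 := by
    rw [h3, mul_assoc, e21, mul_neg, e13, neg_neg]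
  have e32 : J3 * J2 = J1 := by
    rw [h3, mul_assoc, hsq2, mul_one]
  have hmul :
      (z 0 • J1 + z 1 • J2 + z 2 • J3) * (z' 0 • J1 + z' 1 • J2 + z' 2 • J3) =
        (z 2 * z' 1 - z 1 * z' 2) • J1 + (z 2 * z' 0 - z 0 * z' 2) • J2 +
          (z 0 * z' 1 - z 1 * z' 0) • J3 := by
    simp only [add_mul, mul_add, smul_mul_assoc, mul_smul_comm, hsq1, hsq2, hsq3,
      e12, e13, e21, e23, e31, e32, smul_neg, Matrix.cons_val_zero, Matrix.cons_val_one,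
      Matrix.head_cons, Matrix.cons_val_two, Matrix.tail_cons]
    match_scalars <;> first
      | ring1
      | linear_combination -hz
  refine ⟨![z 2 * z' 1 - z 1 * z' 2, z 2 * z' 0 - z 0 * z' 2, z 0 * z' 1 - z 1 * z' 0],
    ?_, ?_⟩
  · simpa using hmul
  · intro x
    rw [← Module.End.mul_apply, hmul]
    simp
end
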